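/- arXiv:1703.04302 — 3 statements merged into one kernel-verified Lean document; each statement's English description precedes it below -/
import Mathlib

section
/- For any bi-infinite sequence B ∈ {1,2}^ℤ, if B contains the pattern 2,1,2*,1,2 (the asterisk marking position j, i.e., B_{j-2}B_{j-1}B_j B_{j+1}B_{j+2} = 2,1,2,1,2), then λ_j(B) > α_∞ + 10^{-2}, where λ_j(B) = [B_j; B_{j+1}, B_{j+2}, ...] + [0; B_{j-1}, B_{j-2}, ...]. -/
open Filter Topology

/-- Value of a finite continued fraction `[a₀; a₁, …, aₙ]` with natural-number entries
(the empty list has value 0, and a trailing `1/0 = 0` convention makes the recursion correct). -/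
noncomputable def cfList : List ℕ → ℝ
  | [] => 0
  | a :: l => (a : ℝ) + 1 / cfList l

/-- `n`-th convergent `[a 0; a 1, …, a n]` of the infinite continued fraction with entries `a`. -/
noncomputable def cfConvs (a : ℕ → ℕ) (n : ℕ) : ℝ :=
  cfList ((List.range (n + 1)).map a)

/-- `CFLim a x` : the infinite continued fraction `[a 0; a 1, a 2, …]` converges to `x`. -/
def CFLim (a : ℕ → ℕ) (x : ℝ) : Prop :=
  Tendsto (cfConvs a) atTop (nhds x)

/-- The eventually periodic sequence of partial quotients with preperiod `pre` and period `per`. -/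
def epseq (pre per : List ℕ) : ℕ → ℕ :=
  fun n => if n < pre.length then pre.getD n 0 else per.getD ((n - pre.length) % per.length) 0

/-- `IsLambda B j v` : for the bi-infinite sequence `B`,
`v = λ_j(B) = [B j; B (j+1), …] + [0; B (j-1), B (j-2), …]`. -/
def IsLambda (B : ℤ → ℕ) (j : ℤ) (v : ℝ) : Prop :=
  ∃ x y : ℝ,
    CFLim (fun n => B (j + n)) x ∧
    CFLim (fun n => if n = 0 then 0 else B (j - n)) y ∧
    v = x + y

/-!
Only the first few partial quotients matter. Convergents of even index bound a continued
fraction from below and those of odd index from above, because the value of a finite continued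
fraction is monotone in its last entry for an even number of preceding entries and antitone for
an odd number. Hence `λ_j(B) ≥ [2; 1, 2] + [0; 1, 2] = 10/3`, while
`α_∞ ≤ [2; 1, 1, 2] + [0; 1, 2, 2] = 13/5 + 5/7`, and `10/3 - 13/5 - 5/7 = 2/105 > 1/100`.
-/

open Set

/-- `[l₀; l₁, …, lₙ, t]` for a real last entry `t`. -/
noncomputable def cfVal : List ℕ → ℝ → ℝ
  | [], t => t
  | a :: l, t => (a : ℝ) + 1 / cfVal l t

lemma cfVal_append : ∀ (l₁ l₂ : List ℕ) (t : ℝ), cfVal (l₁ ++ l₂) t = cfVal l₁ (cfVal l₂ t)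
  | [], _, _ => rfl
  | a :: l₁, l₂, t => by rw [List.cons_append, cfVal, cfVal, cfVal_append l₁]

lemma cfVal_zero : ∀ l : List ℕ, cfVal l 0 = cfList l
  | [] => rfl
  | a :: l => by rw [cfVal, cfList, cfVal_zero l]

lemma cfList_append (l₁ l₂ : List ℕ) : cfList (l₁ ++ l₂) = cfVal l₁ (cfList l₂) := by
  rw [← cfVal_zero, cfVal_append, cfVal_zero]

lemma cfList_nonneg : ∀ l : List ℕ, 0 ≤ cfList l
  | [] => le_rfl
  | a :: l => by have := cfList_nonneg l; rw [cfList]; positivity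

lemma cfVal_pos : ∀ (l : List ℕ) {t : ℝ}, 0 < t → 0 < cfVal l t
  | [], _, ht => ht
  | a :: l, _, ht => by have := cfVal_pos l ht; rw [cfVal]; positivity

lemma cfVal_monotoneOn_antitoneOn : ∀ l : List ℕ,
    (Even l.length → MonotoneOn (cfVal l) (Ioi 0)) ∧ (Odd l.length → AntitoneOn (cfVal l) (Ioi 0))
  | [] => ⟨fun _ _ _ _ _ hst => hst, fun h => absurd h (by decide)⟩
  | a :: l => by
    obtain ⟨ih_even, ih_odd⟩ := cfVal_monotoneOn_antitoneOn l
    refine ⟨fun h s hs t ht hst => ?_, fun h s hs t ht hst => ?_⟩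
    · have hle := ih_odd (by simpa [Nat.even_add_one] using h) hs ht hst
      have := cfVal_pos l ht
      simp only [cfVal]
      gcongr
    · have hle := ih_even (by simpa [Nat.odd_add_one] using h) hs ht hst
      have := cfVal_pos l hs
      simp only [cfVal]
      gcongr

lemma cfConvs_eq_cfVal (a : ℕ → ℕ) (m : ℕ) : cfConvs a m = cfVal ((List.range m).map a) (a m) := by
  simp [cfConvs, List.range_succ, cfList_append, cfList]

lemma cfConvs_add_add_one (a : ℕ → ℕ) (m k : ℕ) :
    cfConvs a (m + k + 1) =
      cfVal ((List.range m).map a) (a m + 1 / cfConvs (fun i => a (m + 1 + i)) k) := by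
  rw [cfConvs, show m + k + 1 + 1 = m + 1 + (k + 1) by ring, List.range_add, List.map_append,
    cfList_append, List.range_succ, List.map_append, cfVal_append, List.map_map]
  rfl

lemma cfConvs_le_cfConvs_of_even {a : ℕ → ℕ} {m n : ℕ} (ha : 0 < a m) (hm : Even m)
    (hmn : m ≤ n) : cfConvs a m ≤ cfConvs a n := by
  obtain rfl | hlt := hmn.eq_or_lt
  · rfl
  obtain ⟨k, rfl⟩ := Nat.exists_eq_add_of_lt hlt
  have ha' : (0 : ℝ) < a m := by exact_mod_cast ha
  have hr : (0 : ℝ) ≤ 1 / cfConvs (fun i => a (m + 1 + i)) k := one_div_nonneg.2 (cfList_nonneg _)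
  rw [cfConvs_eq_cfVal, cfConvs_add_add_one]
  exact (cfVal_monotoneOn_antitoneOn ((List.range m).map a)).1 (by simpa using hm) ha'
    (add_pos_of_pos_of_nonneg ha' hr) (le_add_of_nonneg_right hr)

lemma cfConvs_le_cfConvs_of_odd {a : ℕ → ℕ} {m n : ℕ} (ha : 0 < a m) (hm : Odd m)
    (hmn : m ≤ n) : cfConvs a n ≤ cfConvs a m := by
  obtain rfl | hlt := hmn.eq_or_lt
  · rfl
  obtain ⟨k, rfl⟩ := Nat.exists_eq_add_of_lt hlt
  have ha' : (0 : ℝ) < a m := by exact_mod_cast ha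
  have hr : (0 : ℝ) ≤ 1 / cfConvs (fun i => a (m + 1 + i)) k := one_div_nonneg.2 (cfList_nonneg _)
  rw [cfConvs_add_add_one, cfConvs_eq_cfVal a m]
  exact (cfVal_monotoneOn_antitoneOn ((List.range m).map a)).2 (by simpa using hm) ha'
    (add_pos_of_pos_of_nonneg ha' hr) (le_add_of_nonneg_right hr)

lemma CFLim.cfConvs_le_of_even {a : ℕ → ℕ} {x : ℝ} (hx : CFLim a x) {m : ℕ} (ha : 0 < a m)
    (hm : Even m) : cfConvs a m ≤ x :=
  ge_of_tendsto hx (eventually_atTop.2 ⟨m, fun _ => cfConvs_le_cfConvs_of_even ha hm⟩)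

lemma CFLim.le_cfConvs_of_odd {a : ℕ → ℕ} {x : ℝ} (hx : CFLim a x) {m : ℕ} (ha : 0 < a m)
    (hm : Odd m) : x ≤ cfConvs a m :=
  le_of_tendsto hx (eventually_atTop.2 ⟨m, fun _ => cfConvs_le_cfConvs_of_odd ha hm⟩)

theorem stmt4_general (B : ℤ → ℕ) (j : ℤ)
    (hpat : B (j - 2) = 2 ∧ B (j - 1) = 1 ∧ B j = 2 ∧ B (j + 1) = 1 ∧ B (j + 2) = 2)
    (v : ℝ) (hv : IsLambda B j v) (x y : ℝ)
    (hx : CFLim (epseq [] [2,1,1,2,2,2,1]) x)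
    (hy : CFLim (epseq [0,1,2,2,2,1,1,2,1] [2]) y) :
    v > (x + y) + 1 / 100 := by
  obtain ⟨X, Y, hX, hY, rfl⟩ := hv
  obtain ⟨hm2, hm1, h0, h1, h2⟩ := hpat
  have hX_ge := hX.cfConvs_le_of_even (m := 2) (by simp [h2]) even_two
  have hY_ge := hY.cfConvs_le_of_even (m := 2) (by simp [hm2]) even_two
  have hx_le := hx.le_cfConvs_of_odd (m := 3) (by decide) (by decide)
  have hy_le := hy.le_cfConvs_of_odd (m := 3) (by decide) (by decide)
  norm_num [cfConvs, List.range_succ, cfList, epseq, hm2, hm1, h0, h1, h2]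
    at hX_ge hY_ge hx_le hy_le
  linarith

theorem stmt4 (B : ℤ → ℕ) (hB : ∀ n, B n = 1 ∨ B n = 2) (j : ℤ)
    (hpat : B (j - 2) = 2 ∧ B (j - 1) = 1 ∧ B j = 2 ∧ B (j + 1) = 1 ∧ B (j + 2) = 2)
    (v : ℝ) (hv : IsLambda B j v) (x y : ℝ)
    (hx : CFLim (epseq [] [2,1,1,2,2,2,1]) x)
    (hy : CFLim (epseq [0,1,2,2,2,1,1,2,1] [2]) y) :
    v > (x + y) + 1 / 100 :=
  stmt4_general B j hpat v hv x y hx hy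
end

section
/- For any bi-infinite sequence B ∈ {1,2}^ℤ, if B_{j-1} = B_j = 2 then λ_j(B) < [2;1,2,1] + [0;2,2,1] = 89/28 < α_∞ - 10^{-1}. -/
open Filter Topology

/-! Every one of the four continued fractions involved has, from some index on,
partial quotients in `{1, 2}`, so its tail lies in `[1, 3]`. The map
`z ↦ [a₀; a₁, …, a_{N-1}, z]` is increasing on `z > 0` for even `N` and decreasing for odd `N`,
hence each of them is bounded by the finite continued fraction with last quotient `3`.
For `λ_j(B)` the prefixes are `[2, B (j+1)]` and `[0, 2, B (j-2), B (j-3)]`, and checking the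
remaining choices of these digits gives `λ_j(B) ≤ 11/4 + 11/26 < 89/28`. -/

open Set

noncomputable def cfWithTail : List ℕ → ℝ → ℝ
  | [], z => z
  | a :: p, z => (a : ℝ) + 1 / cfWithTail p z

lemma cfWithTail_pos (p : List ℕ) {z : ℝ} (hz : 0 < z) : 0 < cfWithTail p z := by
  induction p with
  | nil => exact hz
  | cons a p ih => simp only [cfWithTail]; positivity

lemma cfWithTail_cons_antitoneOn {p : List ℕ} (a : ℕ) (h : MonotoneOn (cfWithTail p) (Ioi 0)) :
    AntitoneOn (cfWithTail (a :: p)) (Ioi 0) := by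
  intro z hz w hw hzw
  have := cfWithTail_pos p hz
  simp only [cfWithTail]
  gcongr
  exact h hz hw hzw

lemma cfWithTail_cons_monotoneOn {p : List ℕ} (a : ℕ) (h : AntitoneOn (cfWithTail p) (Ioi 0)) :
    MonotoneOn (cfWithTail (a :: p)) (Ioi 0) := by
  intro z hz w hw hzw
  have := cfWithTail_pos p hw
  simp only [cfWithTail]
  gcongr
  exact h hz hw hzw

lemma cfWithTail_monotoneOn_antitoneOn (p : List ℕ) :
    (Even p.length → MonotoneOn (cfWithTail p) (Ioi 0)) ∧
      (Odd p.length → AntitoneOn (cfWithTail p) (Ioi 0)) := by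
  induction p with
  | nil => exact ⟨fun _ => monotoneOn_id, fun h => absurd h Nat.not_odd_zero⟩
  | cons a p ih =>
    simp only [List.length_cons, Nat.even_add_one, Nat.not_even_iff_odd, Nat.odd_add_one,
      Nat.not_odd_iff_even]
    exact ⟨fun h => cfWithTail_cons_monotoneOn a (ih.2 h),
      fun h => cfWithTail_cons_antitoneOn a (ih.1 h)⟩

lemma cfConvs_zero (a : ℕ → ℕ) : cfConvs a 0 = a 0 := by
  simp [cfConvs, cfList]

lemma cfConvs_succ (a : ℕ → ℕ) (n : ℕ) :
    cfConvs a (n + 1) = a 0 + 1 / cfConvs (fun k => a (k + 1)) n := by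
  simp only [cfConvs, List.range_succ_eq_map, List.map_cons, List.map_map, cfList]
  rfl

lemma cfConvs_add (a : ℕ → ℕ) (N m : ℕ) :
    cfConvs a (N + m) = cfWithTail ((List.range N).map a) (cfConvs (fun k => a (N + k)) m) := by
  induction N generalizing a with
  | zero => simp [cfWithTail]
  | succ N ih =>
    rw [show N + 1 + m = N + m + 1 by omega, cfConvs_succ, ih, List.range_succ_eq_map]
    simp only [List.map_cons, List.map_map, cfWithTail]
    congr 4
    ext k
    congr 1
    omega

lemma cfConvs_mem_Icc_one_three {a : ℕ → ℕ} (ha : ∀ k, a k = 1 ∨ a k = 2) (n : ℕ) :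
    cfConvs a n ∈ Icc (1 : ℝ) 3 := by
  induction n generalizing a with
  | zero => rcases ha 0 with h | h <;> norm_num [cfConvs_zero, h]
  | succ n ih =>
    obtain ⟨h1, h3⟩ := ih (fun k => ha (k + 1))
    have hinv_le : 1 / cfConvs (fun k => a (k + 1)) n ≤ 1 := (div_le_one (by linarith)).2 h1
    have hinv_nonneg : 0 ≤ 1 / cfConvs (fun k => a (k + 1)) n := by positivity
    rw [cfConvs_succ]
    rcases ha 0 with h | h <;> rw [h] <;> constructor <;> push_cast <;> linarith

lemma cfConvs_add_eq_cfWithTail {a : ℕ → ℕ} {N : ℕ} (ha : ∀ k ≥ N, a k = 1 ∨ a k = 2) (m : ℕ) :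
    ∃ z ∈ Icc (1 : ℝ) 3, cfConvs a (m + N) = cfWithTail ((List.range N).map a) z :=
  ⟨_, cfConvs_mem_Icc_one_three (fun k => ha (N + k) (by omega)) m, by rw [add_comm, cfConvs_add]⟩

lemma CFLim.le_cfWithTail_three {a : ℕ → ℕ} {x : ℝ} (hx : CFLim a x) {N : ℕ} (hN : Even N)
    (ha : ∀ k ≥ N, a k = 1 ∨ a k = 2) : x ≤ cfWithTail ((List.range N).map a) 3 := by
  have hmono := (cfWithTail_monotoneOn_antitoneOn ((List.range N).map a)).1 (by simpa using hN)
  refine le_of_tendsto ((tendsto_add_atTop_iff_nat N).2 hx) (Eventually.of_forall fun m => ?_)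
  obtain ⟨z, ⟨h1, h3⟩, hz⟩ := cfConvs_add_eq_cfWithTail ha m
  rw [hz]
  exact hmono (show (0 : ℝ) < z by linarith) (show (0 : ℝ) < 3 by norm_num) h3

lemma CFLim.cfWithTail_three_le {a : ℕ → ℕ} {x : ℝ} (hx : CFLim a x) {N : ℕ} (hN : Odd N)
    (ha : ∀ k ≥ N, a k = 1 ∨ a k = 2) : cfWithTail ((List.range N).map a) 3 ≤ x := by
  have hanti := (cfWithTail_monotoneOn_antitoneOn ((List.range N).map a)).2 (by simpa using hN)
  refine ge_of_tendsto ((tendsto_add_atTop_iff_nat N).2 hx) (Eventually.of_forall fun m => ?_)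
  obtain ⟨z, ⟨h1, h3⟩, hz⟩ := cfConvs_add_eq_cfWithTail ha m
  rw [hz]
  exact hanti (show (0 : ℝ) < z by linarith) (show (0 : ℝ) < 3 by norm_num) h3

lemma epseq_mem {pre per : List ℕ} (hper : per ≠ []) {n : ℕ} (hn : pre.length ≤ n) :
    epseq pre per n ∈ per := by
  rw [epseq, if_neg (by omega), List.getD_eq_getElem _ _ (Nat.mod_lt _ (List.length_pos_iff.2 hper))]
  exact List.getElem_mem _

theorem stmt6 (B : ℤ → ℕ) (hB : ∀ n, B n = 1 ∨ B n = 2) (j : ℤ)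
    (hj : B (j - 1) = 2 ∧ B j = 2) (v : ℝ) (hv : IsLambda B j v) (x y : ℝ)
    (hx : CFLim (epseq [] [2,1,1,2,2,2,1]) x)
    (hy : CFLim (epseq [0,1,2,2,2,1,1,2,1] [2]) y) :
    v < cfList [2,1,2,1] + cfList [0,2,2,1] ∧
    cfList [2,1,2,1] + cfList [0,2,2,1] = 89 / 28 ∧
    89 / 28 < (x + y) - 1 / 10 := by
  obtain ⟨x₀, y₀, hx₀, hy₀, rfl⟩ := hv
  have hx₀_le : x₀ ≤ 11 / 4 := by
    have := hx₀.le_cfWithTail_three (N := 2) even_two fun k _ => hB _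
    rcases hB (j + 1) with h | h <;>
      norm_num [List.range_succ, cfWithTail, hj.2, h] at this <;> linarith
  have hy₀_le : y₀ ≤ 11 / 26 := by
    have := hy₀.le_cfWithTail_three (N := 4) (by decide) fun k hk => by
      simpa [show k ≠ 0 by omega] using hB (j - k)
    rcases hB (j - 2) with h | h <;> rcases hB (j - 3) with h' | h' <;>
      norm_num [List.range_succ, cfWithTail, hj.1, h, h'] at this <;> linarith
  have hx_ge := hx.cfWithTail_three_le (N := 7) (by decide) fun k _ => by
    have := epseq_mem (pre := []) (per := [2,1,1,2,2,2,1]) (by simp) (Nat.zero_le k)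
    simp only [List.mem_cons, List.not_mem_nil, or_false] at this
    omega
  have hy_ge := hy.cfWithTail_three_le (N := 9) (by decide) fun k hk =>
    Or.inr (List.mem_singleton.1 (epseq_mem (pre := [0,1,2,2,2,1,1,2,1]) (by simp) hk))
  have hsum : cfList [2,1,2,1] + cfList [0,2,2,1] = 89 / 28 := by norm_num [cfList]
  norm_num [List.range_succ, epseq, cfWithTail] at hx_ge hy_ge
  exact ⟨by linarith, hsum, by linarith⟩
end

section
/- Let b_∞ = [2; \overline{1,1,2,2,2,1,2}] + [0; \overline{1,2,2,2,1,1,2}] and B_∞ = [2; 1, \overline{1,2,2,2,1,2,1,1,2,1,1,2}] + [0; 1,2,2,2,1,1,2,1,2,2,2,1,1,2,1,2,2, \overline{1,2,2,2,1,2,1,1,2,1,1,2}]. Then b_∞ < B_∞, and moreover 3.2930442 < b_∞ < 3.2930443 and 3.2930444 < B_∞ < 3.2930445. -/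
open Filter Topology

/-!
Every tail of the four expansions consists of 1s and 2s, so as a continued fraction it lies
in `[1, 3]`. Prefixing the first `N` partial quotients is a composition of the decreasing
maps `t ↦ a + 1/t`, so pushing the interval `[1, 3]` through them in exact rational arithmetic
encloses every late convergent, hence the limit. With `N = 30` the enclosures are narrow
enough to separate `b_∞` from `B_∞` and to certify the decimal bounds.
-/

noncomputable def cfAppend : List ℕ → ℝ → ℝ
  | [], t => t
  | a :: p, t => (a : ℝ) + 1 / cfAppend p t

lemma cfList_append_s13 (p l : List ℕ) : cfList (p ++ l) = cfAppend p (cfList l) := by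
  induction p with
  | nil => rfl
  | cons a p ih => simp only [List.cons_append, cfList, cfAppend, ih]

lemma cfList_mem_Icc {M : ℕ} {l : List ℕ} (hl : l ≠ []) (h : ∀ a ∈ l, a ∈ Set.Icc 1 M) :
    cfList l ∈ Set.Icc 1 (M + 1 : ℝ) := by
  induction l with
  | nil => exact absurd rfl hl
  | cons a rest ih =>
    obtain ⟨ha₁, haM⟩ : (1 : ℝ) ≤ a ∧ (a : ℝ) ≤ M := by exact_mod_cast h a List.mem_cons_self
    rcases eq_or_ne rest [] with rfl | hrest
    · simp only [cfList, div_zero, add_zero]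
      constructor <;> linarith
    · obtain ⟨h₁, -⟩ := ih hrest fun b hb => h b (List.mem_cons_of_mem _ hb)
      have hinv : 0 < 1 / cfList rest ∧ 1 / cfList rest ≤ 1 :=
        ⟨by positivity, (div_le_one (by linarith)).2 h₁⟩
      simp only [cfList]
      constructor <;> linarith

-- The endpoints swap at every step because `t ↦ a + 1/t` is decreasing.
def cfAppendInterval : List ℕ → ℚ × ℚ → ℚ × ℚ
  | [], I => I
  | a :: p, I => ((a : ℚ) + 1 / (cfAppendInterval p I).2, (a : ℚ) + 1 / (cfAppendInterval p I).1)

lemma cfAppend_mem_cfAppendInterval (p : List ℕ) {t : ℝ} {I : ℚ × ℚ} (hI : 0 < I.1)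
    (ht : (I.1 : ℝ) ≤ t ∧ t ≤ I.2) :
    0 < (cfAppendInterval p I).1 ∧
      ((cfAppendInterval p I).1 : ℝ) ≤ cfAppend p t ∧ cfAppend p t ≤ (cfAppendInterval p I).2 := by
  induction p with
  | nil => exact ⟨hI, ht⟩
  | cons a p ih =>
    obtain ⟨hJ, hlo, hhi⟩ := ih
    set J := cfAppendInterval p I
    have hJ' : (0 : ℝ) < J.1 := by exact_mod_cast hJ
    have hinv_lo : 1 / (J.2 : ℝ) ≤ 1 / cfAppend p t := one_div_le_one_div_of_le (by linarith) hhi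
    have hinv_hi : 1 / cfAppend p t ≤ 1 / (J.1 : ℝ) := one_div_le_one_div_of_le hJ' hlo
    have hJ₂ : 0 < J.2 := by exact_mod_cast hJ'.trans_le (hlo.trans hhi)
    simp only [cfAppendInterval, cfAppend]
    push_cast
    exact ⟨by positivity, by linarith, by linarith⟩

lemma cfConvs_eq_cfAppend (a : ℕ → ℕ) {N n : ℕ} (hn : N ≤ n) :
    cfConvs a n = cfAppend ((List.range N).map a)
      (cfList ((List.range (n - N + 1)).map fun i => a (N + i))) := by
  rw [cfConvs, ← cfList_append_s13, show n + 1 = N + (n - N + 1) by omega, List.range_add,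
    List.map_append, List.map_map]
  rfl

theorem CFLim.mem_cfAppendInterval {a : ℕ → ℕ} {x : ℝ} (hx : CFLim a x) (N : ℕ) {M : ℕ}
    (ha : ∀ m, N ≤ m → a m ∈ Set.Icc 1 M) :
    ((cfAppendInterval ((List.range N).map a) (1, M + 1)).1 : ℝ) ≤ x ∧
      x ≤ (cfAppendInterval ((List.range N).map a) (1, M + 1)).2 := by
  have hconv : ∀ n, N ≤ n →
      ((cfAppendInterval ((List.range N).map a) (1, M + 1)).1 : ℝ) ≤ cfConvs a n ∧
        cfConvs a n ≤ (cfAppendInterval ((List.range N).map a) (1, M + 1)).2 := by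
    intro n hn
    rw [cfConvs_eq_cfAppend a hn]
    refine (cfAppend_mem_cfAppendInterval _ one_pos ?_).2
    push_cast
    refine cfList_mem_Icc (by simp) ?_
    simp only [List.mem_map, List.mem_range]
    rintro _ ⟨i, -, rfl⟩
    exact ha _ (by omega)
  exact ⟨ge_of_tendsto hx (Filter.eventually_atTop.2 ⟨N, fun n hn => (hconv n hn).1⟩),
    le_of_tendsto hx (Filter.eventually_atTop.2 ⟨N, fun n hn => (hconv n hn).2⟩)⟩

lemma epseq_mem_Icc {pre per : List ℕ} {M N : ℕ} (hper : per ≠ [])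
    (hM : ∀ a ∈ per, a ∈ Set.Icc 1 M) (hN : pre.length ≤ N) (m : ℕ) (hm : N ≤ m) :
    epseq pre per m ∈ Set.Icc 1 M := by
  have hlt : (m - pre.length) % per.length < per.length :=
    Nat.mod_lt _ (List.length_pos_iff.2 hper)
  rw [epseq, if_neg (by omega), List.getD_eq_getElem _ _ hlt]
  exact hM _ (List.getElem_mem hlt)

theorem stmt13 (x₁ y₁ x₂ y₂ : ℝ)
    (hx₁ : CFLim (epseq [] [2,1,1,2,2,2,1]) x₁)
    (hy₁ : CFLim (epseq [0] [1,2,2,2,1,1,2]) y₁)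
    (hx₂ : CFLim (epseq [2,1] [1,2,2,2,1,2,1,1,2,1,1,2]) x₂)
    (hy₂ : CFLim (epseq [0,1,2,2,2,1,1,2,1,2,2,2,1,1,2,1,2,2] [1,2,2,2,1,2,1,1,2,1,1,2]) y₂) :
    x₁ + y₁ < x₂ + y₂ ∧
    (3.2930442 : ℝ) < x₁ + y₁ ∧ x₁ + y₁ < (3.2930443 : ℝ) ∧
    (3.2930444 : ℝ) < x₂ + y₂ ∧ x₂ + y₂ < (3.2930445 : ℝ) := by
  have ex₁ := hx₁.mem_cfAppendInterval 30 (epseq_mem_Icc (M := 2) (by simp) (by decide) (by simp))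
  have ey₁ := hy₁.mem_cfAppendInterval 30 (epseq_mem_Icc (M := 2) (by simp) (by decide) (by simp))
  have ex₂ := hx₂.mem_cfAppendInterval 30 (epseq_mem_Icc (M := 2) (by simp) (by decide) (by simp))
  have ey₂ := hy₂.mem_cfAppendInterval 30 (epseq_mem_Icc (M := 2) (by simp) (by decide) (by simp))
  norm_num [cfAppendInterval, epseq, List.range_succ] at ex₁ ey₁ ex₂ ey₂
  refine ⟨by linarith, by linarith, by linarith, by linarith, by linarith⟩
end
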